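/- arXiv:1311.3223 — 6 statements merged into one kernel-verified Lean document; each statement's English description precedes it below -/
import Mathlib

section
/- Let (X_u)_{u∈ℕ} be i.i.d. random variables taking values in [0,1] with E[X_0] = 1/2 and such that P(1/2 − ε' ≤ X_0 ≤ 1/2 + ε') > 0 for every ε' > 0. Then for every ε > 0, the probability that for all n ∈ ℕ the average (1/(n+1))·∑_{u=0}^{n} X_u lies in [1/2 − ε, 1/2 + ε] is strictly positive (i.e., site 0 is ε-flat to the right with positive probability). -/
open MeasureTheory ProbabilityTheory Filter Topology ENNReal

/-- For i.i.d. `[0,1]`-valued random variables with mean `1/2` and mass arbitrarily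
close to `1/2`, site `0` is `ε`-flat to the right with positive probability. -/
theorem stmt_0 {Ω : Type*} [MeasurableSpace Ω] (μ : Measure Ω) [IsProbabilityMeasure μ]
    (X : ℕ → Ω → ℝ) (hmeas : ∀ u, Measurable (X u))
    (hindep : iIndepFun X μ)
    (hident : ∀ u, IdentDistrib (X u) (X 0) μ μ)
    (hrange : ∀ u ω, X u ω ∈ Set.Icc (0 : ℝ) 1)
    (hmean : ∫ ω, X 0 ω ∂μ = 1 / 2)
    (hmass : ∀ ε' > (0 : ℝ),
      0 < μ {ω | X 0 ω ∈ Set.Icc (1 / 2 - ε') (1 / 2 + ε')}) :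
    ∀ ε > (0 : ℝ),
      0 < μ {ω | ∀ n : ℕ,
        (1 / (n + 1) : ℝ) * ∑ u ∈ Finset.range (n + 1), X u ω
          ∈ Set.Icc (1 / 2 - ε) (1 / 2 + ε)} := by
  intro ε hε
  set δ : ℝ := ε / 2 with hδdef
  have hδ : 0 < δ := by positivity
  -- integrability
  have hint : Integrable (X 0) μ := by
    refine (integrable_const (1 : ℝ)).mono' (hmeas 0).aestronglyMeasurable ?_
    filter_upwards with ω
    have h := hrange 0 ω
    rw [Real.norm_eq_abs, abs_le]
    exact ⟨by linarith [h.1], by simpa using h.2⟩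
  -- strong law of large numbers
  have hslln := strong_law_ae_real X hint (fun i j hij => hindep.indepFun hij) hident
  rw [hmean] at hslln
  -- the "good tail" events
  set G : ℕ → Set Ω := fun M =>
    {ω | ∀ n : ℕ, |∑ u ∈ Finset.Ico M n, (X u ω - 1 / 2)| ≤ δ * n} with hGdef
  -- a.s. each point is eventually in some G M
  have hae : ∀ᵐ ω ∂μ, ∃ M, ω ∈ G M := by
    filter_upwards [hslln] with ω hω
    have hDval : ∀ n : ℕ,
        ∑ u ∈ Finset.range n, (X u ω - 1 / 2)
          = (∑ u ∈ Finset.range n, X u ω) - n / 2 := by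
      intro n
      rw [Finset.sum_sub_distrib, Finset.sum_const, Finset.card_range, nsmul_eq_mul]
      ring
    have hD : Tendsto
        (fun n : ℕ => (∑ u ∈ Finset.range n, (X u ω - 1 / 2)) / n) atTop (𝓝 0) := by
      have h1 : Tendsto
          (fun n : ℕ => (∑ i ∈ Finset.range n, X i ω) / n - 1 / 2) atTop (𝓝 0) := by
        simpa using hω.sub_const (1 / 2)
      apply h1.congr'
      filter_upwards [eventually_ge_atTop 1] with n hn
      have hn' : (n : ℝ) ≠ 0 := by
        exact_mod_cast Nat.one_le_iff_ne_zero.1 hn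
      rw [hDval n, sub_div]
      congr 1
      field_simp
    have hev : ∀ᶠ n : ℕ in atTop,
        |(∑ u ∈ Finset.range n, (X u ω - 1 / 2)) / n| ≤ δ / 4 := by
      have := hD.eventually (Metric.closedBall_mem_nhds (0 : ℝ) (by positivity : (0:ℝ) < δ/4))
      filter_upwards [this] with n hn
      rw [Real.dist_eq, sub_zero] at hn
      exact hn
    obtain ⟨K, hK⟩ := eventually_atTop.1 hev
    set C : ℝ := ∑ m ∈ Finset.range K, |∑ u ∈ Finset.range m, (X u ω - 1 / 2)| with hCdef
    have hC0 : 0 ≤ C := Finset.sum_nonneg fun _ _ => abs_nonneg _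
    have hDbound : ∀ n : ℕ,
        |∑ u ∈ Finset.range n, (X u ω - 1 / 2)| ≤ C + δ / 4 * n := by
      intro n
      rcases lt_or_ge n K with h | h
      · have h1 : |∑ u ∈ Finset.range n, (X u ω - 1 / 2)| ≤ C :=
          Finset.single_le_sum (f := fun m => |∑ u ∈ Finset.range m, (X u ω - 1 / 2)|)
            (fun i _ => abs_nonneg _) (Finset.mem_range.2 h)
        have h2 : (0:ℝ) ≤ δ / 4 * n := by positivity
        linarith
      · rcases Nat.eq_zero_or_pos n with rfl | hn
        · simpa using hC0
        · have hne : (0:ℝ) < (n : ℝ) := by exact_mod_cast hn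
          have h1 := hK n h
          rw [abs_div, abs_of_pos hne, div_le_iff₀ hne] at h1
          nlinarith
    set M : ℕ := ⌈4 * C / δ⌉₊ with hMdef
    refine ⟨M, ?_⟩
    intro n
    rcases le_or_gt n M with h | h
    · rw [Finset.Ico_eq_empty (by omega : ¬ M < n)]
      simp only [Finset.sum_empty, abs_zero]
      positivity
    · have hMn : M ≤ n := h.le
      rw [Finset.sum_Ico_eq_sub _ hMn]
      have h1 := hDbound n
      have h2 := hDbound M
      have habs : |(∑ u ∈ Finset.range n, (X u ω - 1 / 2))
            - ∑ u ∈ Finset.range M, (X u ω - 1 / 2)|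
          ≤ |∑ u ∈ Finset.range n, (X u ω - 1 / 2)|
            + |∑ u ∈ Finset.range M, (X u ω - 1 / 2)| := abs_sub _ _
      have hMC : 4 * C / δ ≤ (M : ℝ) := Nat.le_ceil _
      rw [div_le_iff₀ hδ] at hMC
      have hMn' : (M : ℝ) ≤ (n : ℝ) := by exact_mod_cast hMn
      have hδMn : δ * M ≤ δ * n := by nlinarith
      linarith
  -- some G M has positive measure
  have hU : ∃ M, μ (G M) ≠ 0 := by
    by_contra h
    push_neg at h
    have h1 : μ (⋃ M, G M) = 0 := measure_iUnion_null h
    have h2 : μ {ω | ¬ ∃ M, ω ∈ G M} = 0 := hae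
    have h3 : (Set.univ : Set Ω) ⊆ (⋃ M, G M) ∪ {ω | ¬ ∃ M, ω ∈ G M} := by
      intro ω _
      by_cases hh : ∃ M, ω ∈ G M
      · exact Or.inl (Set.mem_iUnion.2 hh)
      · exact Or.inr hh
    have h4 : μ Set.univ ≤ 0 := by
      calc μ Set.univ ≤ μ ((⋃ M, G M) ∪ {ω | ¬ ∃ M, ω ∈ G M}) := measure_mono h3
        _ ≤ μ (⋃ M, G M) + μ {ω | ¬ ∃ M, ω ∈ G M} := measure_union_le _ _
        _ = 0 := by rw [h1, h2, add_zero]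
    simp [measure_univ] at h4
  obtain ⟨M, hGpos⟩ := hU
  -- the "good head" event
  set A : Set Ω := ⋂ u ∈ Finset.range M, X u ⁻¹' Set.Icc (1 / 2 - δ) (1 / 2 + δ) with hAdef
  -- independence of A and G M
  have hIndep : Indep (⨆ u ∈ Set.Iio M, MeasurableSpace.comap (X u) inferInstance)
      (⨆ u ∈ Set.Ici M, MeasurableSpace.comap (X u) inferInstance) μ :=
    indep_iSup_of_disjoint (fun u => (hmeas u).comap_le) hindep.iIndep
      (Set.Iio_disjoint_Ici le_rfl)
  have hAmeas : MeasurableSet[⨆ u ∈ Set.Iio M, MeasurableSpace.comap (X u) inferInstance] A := by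
    refine MeasurableSet.biInter (Finset.range M).countable_toSet fun u hu => ?_
    have h1 : MeasurableSet[MeasurableSpace.comap (X u) inferInstance]
        (X u ⁻¹' Set.Icc (1 / 2 - δ) (1 / 2 + δ)) := ⟨_, measurableSet_Icc, rfl⟩
    exact le_biSup (fun u => MeasurableSpace.comap (X u) inferInstance)
      (show u ∈ Set.Iio M from Finset.mem_range.1 hu) _ h1
  have hGmeas : MeasurableSet[⨆ u ∈ Set.Ici M, MeasurableSpace.comap (X u) inferInstance] (G M) := by
    have hGeq : G M = ⋂ n : ℕ,
        {ω | |∑ u ∈ Finset.Ico M n, (X u ω - 1 / 2)| ≤ δ * n} := by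
      ext ω; simp [hGdef, Set.mem_iInter]
    letI m2 : MeasurableSpace Ω :=
      ⨆ u ∈ Set.Ici M, MeasurableSpace.comap (X u) inferInstance
    rw [hGeq]
    refine MeasurableSet.iInter fun n => ?_
    have hsum : Measurable[m2] fun ω => ∑ u ∈ Finset.Ico M n, (X u ω - 1 / 2) := by
      refine Finset.measurable_sum _ fun u hu => Measurable.sub ?_ measurable_const
      have hle : MeasurableSpace.comap (X u) inferInstance ≤ m2 :=
        le_biSup (fun u => MeasurableSpace.comap (X u) inferInstance)
          (show u ∈ Set.Ici M from (Finset.mem_Ico.1 hu).1)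
      exact measurable_iff_comap_le.2 hle
    exact hsum.abs measurableSet_Iic
  have hmul : μ (A ∩ G M) = μ A * μ (G M) :=
    (Indep_iff _ _ _).1 hIndep A (G M) hAmeas hGmeas
  -- positivity of μ A
  have hAeq : μ A = ∏ u ∈ Finset.range M,
      μ (X u ⁻¹' Set.Icc (1 / 2 - δ) (1 / 2 + δ)) :=
    hindep.meas_biInter (fun u _ => ⟨_, measurableSet_Icc, rfl⟩)
  have hApos : μ A ≠ 0 := by
    rw [hAeq, Finset.prod_ne_zero_iff]
    intro u _
    rw [(hident u).measure_mem_eq measurableSet_Icc]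
    exact (hmass δ hδ).ne'
  -- inclusion into the target event
  have hsub : A ∩ G M ⊆ {ω | ∀ n : ℕ,
      (1 / (n + 1) : ℝ) * ∑ u ∈ Finset.range (n + 1), X u ω
        ∈ Set.Icc (1 / 2 - ε) (1 / 2 + ε)} := by
    rintro ω ⟨hA, hG⟩ n
    have hA' : ∀ u < M, |X u ω - 1 / 2| ≤ δ := by
      intro u hu
      have h1 : ω ∈ X u ⁻¹' Set.Icc (1 / 2 - δ) (1 / 2 + δ) := by
        have := Set.mem_iInter₂.1 hA u (Finset.mem_range.2 hu)
        exact this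
      rw [Set.mem_preimage, Set.mem_Icc] at h1
      rw [abs_le]
      exact ⟨by linarith [h1.1], by linarith [h1.2]⟩
    have hG' := hG
    rw [hGdef] at hG'
    have key : |∑ u ∈ Finset.range (n + 1), (X u ω - 1 / 2)| ≤ ε * (n + 1) := by
      rcases le_or_gt (n + 1) M with h | h
      · calc |∑ u ∈ Finset.range (n + 1), (X u ω - 1 / 2)|
            ≤ ∑ u ∈ Finset.range (n + 1), |X u ω - 1 / 2| :=
              Finset.abs_sum_le_sum_abs _ _
          _ ≤ ∑ _u ∈ Finset.range (n + 1), δ :=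
              Finset.sum_le_sum fun u hu =>
                hA' u (lt_of_lt_of_le (Finset.mem_range.1 hu) h)
          _ = (n + 1) * δ := by
              rw [Finset.sum_const, Finset.card_range, nsmul_eq_mul]; push_cast; ring
          _ ≤ ε * (n + 1) := by nlinarith [Nat.cast_nonneg (α := ℝ) n]
      · have hMn : M ≤ n + 1 := h.le
        have hsplit : ∑ u ∈ Finset.range (n + 1), (X u ω - 1 / 2)
            = (∑ u ∈ Finset.range M, (X u ω - 1 / 2))
              + ∑ u ∈ Finset.Ico M (n + 1), (X u ω - 1 / 2) :=
          (Finset.sum_range_add_sum_Ico _ hMn).symm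
        have h1 : |∑ u ∈ Finset.range M, (X u ω - 1 / 2)| ≤ δ * M := by
          calc |∑ u ∈ Finset.range M, (X u ω - 1 / 2)|
              ≤ ∑ u ∈ Finset.range M, |X u ω - 1 / 2| := Finset.abs_sum_le_sum_abs _ _
            _ ≤ ∑ _u ∈ Finset.range M, δ :=
                Finset.sum_le_sum fun u hu => hA' u (Finset.mem_range.1 hu)
            _ = δ * M := by rw [Finset.sum_const, Finset.card_range, nsmul_eq_mul]; ring
        have h2 := hG' (n + 1)
        have h2' : |∑ u ∈ Finset.Ico M (n + 1), (X u ω - 1 / 2)| ≤ δ * ((n : ℝ) + 1) := by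
          convert h2 using 2
          push_cast; ring
        have hM' : (M : ℝ) ≤ (n : ℝ) + 1 := by exact_mod_cast hMn
        calc |∑ u ∈ Finset.range (n + 1), (X u ω - 1 / 2)|
            ≤ |∑ u ∈ Finset.range M, (X u ω - 1 / 2)|
              + |∑ u ∈ Finset.Ico M (n + 1), (X u ω - 1 / 2)| := by
              rw [hsplit]; exact abs_add_le _ _
          _ ≤ δ * M + δ * ((n : ℝ) + 1) := add_le_add h1 h2'
          _ ≤ ε * (n + 1) := by nlinarith
    have hsum : ∑ u ∈ Finset.range (n + 1), (X u ω - 1 / 2)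
        = (∑ u ∈ Finset.range (n + 1), X u ω) - ((n : ℝ) + 1) / 2 := by
      rw [Finset.sum_sub_distrib, Finset.sum_const, Finset.card_range, nsmul_eq_mul]
      push_cast; ring
    rw [hsum, abs_le] at key
    have hpos : (0 : ℝ) < (n : ℝ) + 1 := by positivity
    rw [Set.mem_Icc, one_div_mul_eq_div]
    constructor
    · rw [le_div_iff₀ hpos]; nlinarith
    · rw [div_le_iff₀ hpos]; nlinarith
  -- conclude
  calc (0 : ℝ≥0∞) < μ A * μ (G M) := ENNReal.mul_pos hApos hGpos
    _ = μ (A ∩ G M) := hmul.symm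
    _ ≤ μ _ := measure_mono hsub
end

section
/- Let (X_u)_{u∈ℤ} be i.i.d. random variables taking values in [0,1] with E[X_0] = 1/2 and such that P(1/2 − ε' ≤ X_0 ≤ 1/2 + ε') > 0 for every ε' > 0. Then for every ε > 0, the probability that for all m, n ∈ ℕ the average (1/(m+n+1))·∑_{u=−m}^{n} X_u lies in [1/2 − ε, 1/2 + ε] is strictly positive (i.e., site 0 is two-sidedly ε-flat with positive probability). -/
open MeasureTheory ProbabilityTheory Filter Finset
open scoped ENNReal

lemma sum_shift_aux (f : ℤ → ℝ) (a : ℤ) (k : ℕ) :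
    ∑ u ∈ Finset.Ico a (a + k), f u = ∑ i ∈ Finset.range k, f (a + i) := by
  have h : Finset.Ico a (a + k) = (Finset.range k).map
      ⟨fun i : ℕ => a + (i : ℤ), fun i j hij => by dsimp at hij; omega⟩ := by
    ext u
    simp only [Finset.mem_Ico, Finset.mem_map, Finset.mem_range, Function.Embedding.coeFn_mk]
    constructor
    · intro h; exact ⟨(u - a).toNat, by omega, by show a + ((u - a).toNat : ℤ) = u; omega⟩
    · rintro ⟨i, hi, rfl⟩; show a ≤ a + (i : ℤ) ∧ a + (i : ℤ) < a + k; constructor <;> omega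
  rw [h, Finset.sum_map]
  rfl

lemma Ico_eq_Icc_int_aux (a b : ℤ) : Finset.Ico a (b + 1) = Finset.Icc a b := by
  ext u; simp only [Finset.mem_Ico, Finset.mem_Icc]; omega

lemma sum_Ico_consec_int (f : ℤ → ℝ) {a b c : ℤ} (hab : a ≤ b) (hbc : b ≤ c) :
    ∑ u ∈ Finset.Ico a c, f u = (∑ u ∈ Finset.Ico a b, f u) + ∑ u ∈ Finset.Ico b c, f u := by
  rw [← Finset.Ico_union_Ico_eq_Ico hab hbc,
    Finset.sum_union (Finset.Ico_disjoint_Ico_consecutive a b c)]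

set_option maxHeartbeats 1000000 in
/-- For i.i.d. `[0,1]`-valued random variables indexed by `ℤ` with mean `1/2` and mass
arbitrarily close to `1/2`, site `0` is two-sidedly `ε`-flat with positive probability. -/
theorem stmt_1 {Ω : Type*} [MeasurableSpace Ω] (μ : Measure Ω) [IsProbabilityMeasure μ]
    (X : ℤ → Ω → ℝ) (hmeas : ∀ u, Measurable (X u))
    (hindep : iIndepFun X μ)
    (hident : ∀ u, IdentDistrib (X u) (X 0) μ μ)
    (hrange : ∀ u ω, X u ω ∈ Set.Icc (0 : ℝ) 1)
    (hmean : ∫ ω, X 0 ω ∂μ = 1 / 2)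
    (hmass : ∀ ε' > (0 : ℝ),
      0 < μ {ω | X 0 ω ∈ Set.Icc (1 / 2 - ε') (1 / 2 + ε')}) :
    ∀ ε > (0 : ℝ),
      0 < μ {ω | ∀ m n : ℕ,
        (1 / (m + n + 1) : ℝ) * ∑ u ∈ Finset.Icc (-(m : ℤ)) (n : ℤ), X u ω
          ∈ Set.Icc (1 / 2 - ε) (1 / 2 + ε)} := by
  intro ε hε
  set δ : ℝ := ε / 16 with hδdef
  have hδpos : 0 < δ := by positivity
  -- integrability
  have hint : ∀ u : ℤ, Integrable (X u) μ := fun u =>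
    (integrable_const (1 : ℝ)).mono' (hmeas u).aestronglyMeasurable
      (Filter.Eventually.of_forall fun ω => by
        have h := hrange u ω
        rw [Real.norm_eq_abs, abs_le]
        exact ⟨by linarith [h.1], h.2⟩)
  -- strong law of large numbers for reindexed subsequences
  have slln : ∀ g : ℕ → ℤ, Function.Injective g →
      ∀ᵐ ω ∂μ, Filter.Tendsto (fun n : ℕ => (∑ i ∈ Finset.range n, X (g i) ω) / n)
        Filter.atTop (nhds (1 / 2)) := by
    intro g hg
    have h := strong_law_ae_real (fun i => X (g i)) (hint (g 0))
      (fun i j hij => hindep.indepFun (hg.ne hij))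
      (fun i => (hident (g i)).trans (hident (g 0)).symm)
    have hEX : (∫ ω, X (g 0) ω ∂μ) = 1 / 2 := by
      rw [(hident (g 0)).integral_eq, hmean]
    rwa [hEX] at h
  -- the partial-sum control events
  set S : (ℕ → ℤ) → ℕ → Set Ω := fun g M =>
    {ω | ∀ k : ℕ, M ≤ k → |(∑ i ∈ Finset.range k, X (g i) ω) - k / 2| ≤ δ * k} with hSdef
  -- some control event has positive probability
  have hSpos : ∀ g : ℕ → ℤ, Function.Injective g → ∃ M, 0 < μ (S g M) := by
    intro g hg
    by_contra hcon
    push_neg at hcon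
    have hz : ∀ M, μ (S g M) = 0 := fun M => le_antisymm (hcon M) zero_le
    have hU : μ (⋃ M, S g M) = 0 := measure_iUnion_null hz
    have hsub : ∀ᵐ ω ∂μ, ω ∈ ⋃ M, S g M := by
      filter_upwards [slln g hg] with ω hω
      obtain ⟨M, hM⟩ := Metric.tendsto_atTop.1 hω δ hδpos
      refine Set.mem_iUnion.2 ⟨M + 1, fun k hk => ?_⟩
      have hk0 : (0 : ℝ) < k := by
        have : 1 ≤ k := le_trans (Nat.le_add_left 1 M) hk
        exact_mod_cast this
      have hdist := hM k (by omega)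
      rw [Real.dist_eq] at hdist
      have h1 : (∑ i ∈ Finset.range k, X (g i) ω) - k / 2
          = ((∑ i ∈ Finset.range k, X (g i) ω) / k - 1 / 2) * k := by
        field_simp
      rw [h1, abs_mul, abs_of_pos hk0]
      exact mul_le_mul_of_nonneg_right (le_of_lt hdist) (le_of_lt hk0)
    have hcompl : μ ((⋃ M, S g M)ᶜ) = 0 := ae_iff.1 hsub
    have : (1 : ℝ≥0∞) ≤ 0 := by
      calc (1 : ℝ≥0∞) = μ Set.univ := measure_univ.symm
        _ ≤ μ (⋃ M, S g M) + μ ((⋃ M, S g M)ᶜ) := by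
            rw [← Set.union_compl_self (⋃ M, S g M)] ; exact measure_union_le _ _
        _ = 0 := by rw [hU, hcompl, add_zero]
    simp at this
  obtain ⟨Mr, hMr⟩ := hSpos (fun i => (i : ℤ) + 1) (fun i j hij => by dsimp at hij; omega)
  obtain ⟨Ml, hMl⟩ := hSpos (fun i => -(i : ℤ) - 1) (fun i j hij => by dsimp at hij; omega)
  set N : ℕ := max Mr Ml with hNdef
  set I : Set ℝ := Set.Icc (1 / 2 - ε / 2) (1 / 2 + ε / 2) with hIdef
  set A : Set Ω := ⋂ u ∈ Finset.Icc (-(N : ℤ)) (N : ℤ), X u ⁻¹' I with hAdef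
  set Br : Set Ω := {ω | ∀ k : ℕ,
    |(∑ i ∈ Finset.range k, X ((N : ℤ) + 1 + i) ω) - k / 2| ≤ δ * k + 2 * δ * N} with hBrdef
  set Bl : Set Ω := {ω | ∀ k : ℕ,
    |(∑ i ∈ Finset.range k, X (-(N : ℤ) - 1 - i) ω) - k / 2| ≤ δ * k + 2 * δ * N} with hBldef
  have hMrN : Mr ≤ N := le_max_left _ _
  have hMlN : Ml ≤ N := le_max_right _ _
  -- inclusion of the control events into the tail events
  have hSBr : S (fun i => (i : ℤ) + 1) Mr ⊆ Br := by
    intro ω hω k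
    have h1 := hω N hMrN
    have h2 := hω (N + k) (le_trans hMrN (Nat.le_add_right _ _))
    dsimp only at h1 h2
    have h3 : ∑ i ∈ Finset.range (N + k), X ((i : ℤ) + 1) ω
        = (∑ i ∈ Finset.range N, X ((i : ℤ) + 1) ω)
          + ∑ i ∈ Finset.range k, X ((N : ℤ) + 1 + i) ω := by
      rw [Finset.sum_range_add]
      congr 1
      refine Finset.sum_congr rfl fun i _ => ?_
      rw [show ((N + i : ℕ) : ℤ) + 1 = (N : ℤ) + 1 + (i : ℤ) by omega]
    have h5 : (∑ i ∈ Finset.range k, X ((N : ℤ) + 1 + i) ω) - (k : ℝ) / 2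
        = ((∑ i ∈ Finset.range (N + k), X ((i : ℤ) + 1) ω) - ((N + k : ℕ) : ℝ) / 2)
          - ((∑ i ∈ Finset.range N, X ((i : ℤ) + 1) ω) - (N : ℝ) / 2) := by
      rw [h3]; push_cast; ring
    rw [h5]
    have h6 := abs_sub (((∑ i ∈ Finset.range (N + k), X ((i : ℤ) + 1) ω) - ((N + k : ℕ) : ℝ) / 2))
      ((∑ i ∈ Finset.range N, X ((i : ℤ) + 1) ω) - (N : ℝ) / 2)
    have hc : ((N + k : ℕ) : ℝ) = (N : ℝ) + (k : ℝ) := by push_cast; ring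
    rw [hc] at h2
    calc _ ≤ _ := h6
      _ ≤ δ * ((N : ℝ) + k) + δ * N := by rw [← hc] at h2 ⊢; exact add_le_add h2 h1
      _ = δ * k + 2 * δ * N := by ring
  have hSBl : S (fun i => -(i : ℤ) - 1) Ml ⊆ Bl := by
    intro ω hω k
    have h1 := hω N hMlN
    have h2 := hω (N + k) (le_trans hMlN (Nat.le_add_right _ _))
    dsimp only at h1 h2
    have h3 : ∑ i ∈ Finset.range (N + k), X (-(i : ℤ) - 1) ω
        = (∑ i ∈ Finset.range N, X (-(i : ℤ) - 1) ω)
          + ∑ i ∈ Finset.range k, X (-(N : ℤ) - 1 - i) ω := by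
      rw [Finset.sum_range_add]
      congr 1
      refine Finset.sum_congr rfl fun i _ => ?_
      rw [show -((N + i : ℕ) : ℤ) - 1 = -(N : ℤ) - 1 - (i : ℤ) by omega]
    have h5 : (∑ i ∈ Finset.range k, X (-(N : ℤ) - 1 - i) ω) - (k : ℝ) / 2
        = ((∑ i ∈ Finset.range (N + k), X (-(i : ℤ) - 1) ω) - ((N + k : ℕ) : ℝ) / 2)
          - ((∑ i ∈ Finset.range N, X (-(i : ℤ) - 1) ω) - (N : ℝ) / 2) := by
      rw [h3]; push_cast; ring
    rw [h5]
    have h6 := abs_sub (((∑ i ∈ Finset.range (N + k), X (-(i : ℤ) - 1) ω) - ((N + k : ℕ) : ℝ) / 2))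
      ((∑ i ∈ Finset.range N, X (-(i : ℤ) - 1) ω) - (N : ℝ) / 2)
    calc _ ≤ _ := h6
      _ ≤ δ * ((N + k : ℕ) : ℝ) + δ * N := add_le_add h2 h1
      _ = δ * k + 2 * δ * N := by push_cast; ring
  -- pointwise estimate on the good event
  have hkey : A ∩ (Bl ∩ Br) ⊆ {ω | ∀ m n : ℕ,
      (1 / (m + n + 1) : ℝ) * ∑ u ∈ Finset.Icc (-(m : ℤ)) (n : ℤ), X u ω
        ∈ Set.Icc (1 / 2 - ε) (1 / 2 + ε)} := by
    rintro ω ⟨hA, hBl, hBr⟩ m n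
    have hAω : ∀ u : ℤ, -(N : ℤ) ≤ u → u ≤ N → |X u ω - 1 / 2| ≤ ε / 2 := by
      intro u h1 h2
      have hu : X u ω ∈ I := Set.mem_iInter₂.1 hA u (Finset.mem_Icc.2 ⟨h1, h2⟩)
      rw [hIdef, Set.mem_Icc] at hu
      rw [abs_le]
      exact ⟨by linarith [hu.1], by linarith [hu.2]⟩
    have hBrω : ∀ k : ℕ,
        |(∑ i ∈ Finset.range k, X ((N : ℤ) + 1 + i) ω) - (k : ℝ) / 2|
          ≤ δ * k + 2 * δ * N := hBr
    have hBlω : ∀ k : ℕ,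
        |(∑ i ∈ Finset.range k, X (-(N : ℤ) - 1 - i) ω) - (k : ℝ) / 2|
          ≤ δ * k + 2 * δ * N := hBl
    have hmid : ∀ a b : ℕ, a ≤ N → b ≤ N →
        |(∑ u ∈ Finset.Icc (-(a : ℤ)) (b : ℤ), X u ω) - ((a : ℝ) + b + 1) / 2|
          ≤ ε / 2 * ((a : ℝ) + b + 1) := by
      intro a b ha hb
      have hcard : (Finset.Icc (-(a : ℤ)) (b : ℤ)).card = a + b + 1 := by
        rw [Int.card_Icc]; omega
      have h1 : (∑ u ∈ Finset.Icc (-(a : ℤ)) (b : ℤ), X u ω) - ((a : ℝ) + b + 1) / 2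
          = ∑ u ∈ Finset.Icc (-(a : ℤ)) (b : ℤ), (X u ω - 1 / 2) := by
        rw [Finset.sum_sub_distrib, Finset.sum_const, hcard]
        push_cast
        ring
      rw [h1]
      calc |∑ u ∈ Finset.Icc (-(a : ℤ)) (b : ℤ), (X u ω - 1 / 2)|
          ≤ ∑ u ∈ Finset.Icc (-(a : ℤ)) (b : ℤ), |X u ω - 1 / 2| :=
            Finset.abs_sum_le_sum_abs _ _
        _ ≤ ∑ _u ∈ Finset.Icc (-(a : ℤ)) (b : ℤ), (ε / 2) :=
            Finset.sum_le_sum fun u hu => by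
              rw [Finset.mem_Icc] at hu
              exact hAω u (by omega) (by omega)
        _ = ε / 2 * ((a : ℝ) + b + 1) := by
            rw [Finset.sum_const, hcard]; push_cast; ring
    set L : ℝ := (m : ℝ) + n + 1 with hLdef
    have hL : (0 : ℝ) < L := by positivity
    have hIccIco : Finset.Icc (-(m : ℤ)) (n : ℤ) = Finset.Ico (-(m : ℤ)) ((n : ℤ) + 1) :=
      (Ico_eq_Icc_int_aux _ _).symm
    have key : |(∑ u ∈ Finset.Icc (-(m : ℤ)) (n : ℤ), X u ω) - L / 2| ≤ ε * L := by
      have hεnn : (0 : ℝ) ≤ ε := le_of_lt hε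
      rcases le_or_gt (m : ℕ) N with hm | hm <;> rcases le_or_gt (n : ℕ) N with hn | hn
      · -- both sides inside the conditioned window
        have h := hmid m n hm hn
        have : L = (m : ℝ) + n + 1 := hLdef
        calc |(∑ u ∈ Finset.Icc (-(m : ℤ)) (n : ℤ), X u ω) - L / 2|
            ≤ ε / 2 * L := h
          _ ≤ ε * L := by nlinarith
      · -- right tail only
        set k : ℕ := n - N with hkdef
        have hkn : n = N + k := by omega
        have hk1 : 1 ≤ k := by omega
        have hsplit : ∑ u ∈ Finset.Icc (-(m : ℤ)) (n : ℤ), X u ω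
            = (∑ u ∈ Finset.Icc (-(m : ℤ)) (N : ℤ), X u ω)
              + ∑ i ∈ Finset.range k, X ((N : ℤ) + 1 + i) ω := by
          rw [hIccIco, sum_Ico_consec_int (fun u => X u ω)
            (show -(m : ℤ) ≤ (N : ℤ) + 1 by omega) (show (N : ℤ) + 1 ≤ (n : ℤ) + 1 by omega),
            Ico_eq_Icc_int_aux]
          congr 1
          rw [show (n : ℤ) + 1 = ((N : ℤ) + 1) + (k : ℕ) by omega]
          exact sum_shift_aux (fun u => X u ω) ((N : ℤ) + 1) k
        have e1 := hmid m N hm le_rfl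
        have e2 := hBrω k
        have hnr : (n : ℝ) = (N : ℝ) + k := by exact_mod_cast congrArg (Nat.cast : ℕ → ℝ) hkn
        have hdec : (∑ u ∈ Finset.Icc (-(m : ℤ)) (n : ℤ), X u ω) - L / 2
            = ((∑ u ∈ Finset.Icc (-(m : ℤ)) (N : ℤ), X u ω) - ((m : ℝ) + N + 1) / 2)
              + ((∑ i ∈ Finset.range k, X ((N : ℤ) + 1 + i) ω) - (k : ℝ) / 2) := by
          rw [hsplit, hLdef, hnr]; ring
        rw [hdec]
        have f1 : (m : ℝ) + N + 1 ≤ L := by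
          rw [hLdef, hnr]; have : (0:ℝ) ≤ k := Nat.cast_nonneg k; linarith
        have f2 : (k : ℝ) ≤ L := by
          rw [hLdef, hnr]
          have : (0:ℝ) ≤ (m:ℝ) := Nat.cast_nonneg m
          have : (0:ℝ) ≤ (N:ℝ) := Nat.cast_nonneg N
          linarith
        have f3 : (N : ℝ) ≤ L := by
          rw [hLdef, hnr]
          have : (0:ℝ) ≤ (m:ℝ) := Nat.cast_nonneg m
          have : (0:ℝ) ≤ (k:ℝ) := Nat.cast_nonneg k
          linarith
        refine le_trans (abs_add_le _ _) ?_
        refine le_trans (add_le_add e1 e2) ?_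
        rw [hδdef]; nlinarith
      · -- left tail only
        set k : ℕ := m - N with hkdef
        have hkn : m = N + k := by omega
        have hk1 : 1 ≤ k := by omega
        have hrev : ∑ i ∈ Finset.range k, X (-(m : ℤ) + i) ω
            = ∑ i ∈ Finset.range k, X (-(N : ℤ) - 1 - i) ω := by
          rw [← Finset.sum_range_reflect]
          refine Finset.sum_congr rfl fun j hj => ?_
          rw [Finset.mem_range] at hj
          rw [show -(m : ℤ) + ((k - 1 - j : ℕ) : ℤ) = -(N : ℤ) - 1 - (j : ℤ) by omega]
        have hsplit : ∑ u ∈ Finset.Icc (-(m : ℤ)) (n : ℤ), X u ω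
            = (∑ i ∈ Finset.range k, X (-(N : ℤ) - 1 - i) ω)
              + ∑ u ∈ Finset.Icc (-(N : ℤ)) (n : ℤ), X u ω := by
          rw [hIccIco, sum_Ico_consec_int (fun u => X u ω)
            (show -(m : ℤ) ≤ -(N : ℤ) by omega) (show -(N : ℤ) ≤ (n : ℤ) + 1 by omega),
            Ico_eq_Icc_int_aux]
          congr 1
          conv_lhs => rw [show -(N : ℤ) = (-(m : ℤ)) + ((k : ℕ) : ℤ) from by omega]
          rw [sum_shift_aux (fun u => X u ω) (-(m : ℤ)) k]
          exact hrev
        have e1 := hmid N n le_rfl hn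
        have e2 := hBlω k
        have hmr : (m : ℝ) = (N : ℝ) + k := by exact_mod_cast congrArg (Nat.cast : ℕ → ℝ) hkn
        have hdec : (∑ u ∈ Finset.Icc (-(m : ℤ)) (n : ℤ), X u ω) - L / 2
            = ((∑ i ∈ Finset.range k, X (-(N : ℤ) - 1 - i) ω) - (k : ℝ) / 2)
              + ((∑ u ∈ Finset.Icc (-(N : ℤ)) (n : ℤ), X u ω) - ((N : ℝ) + n + 1) / 2) := by
          rw [hsplit, hLdef, hmr]; ring
        rw [hdec]
        have hc0 : (0:ℝ) ≤ (n:ℝ) := Nat.cast_nonneg n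
        have hc1 : (0:ℝ) ≤ (k:ℝ) := Nat.cast_nonneg k
        have hc2 : (0:ℝ) ≤ (N:ℝ) := Nat.cast_nonneg N
        have f1 : (N : ℝ) + n + 1 ≤ L := by rw [hLdef, hmr]; linarith
        have f2 : (k : ℝ) ≤ L := by rw [hLdef, hmr]; linarith
        have f3 : (N : ℝ) ≤ L := by rw [hLdef, hmr]; linarith
        refine le_trans (abs_add_le _ _) ?_
        refine le_trans (add_le_add e2 e1) ?_
        rw [hδdef]; nlinarith
      · -- two tails
        set kl : ℕ := m - N with hkldef
        set kr : ℕ := n - N with hkrdef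
        have hknl : m = N + kl := by omega
        have hknr : n = N + kr := by omega
        have hrev : ∑ i ∈ Finset.range kl, X (-(m : ℤ) + i) ω
            = ∑ i ∈ Finset.range kl, X (-(N : ℤ) - 1 - i) ω := by
          rw [← Finset.sum_range_reflect]
          refine Finset.sum_congr rfl fun j hj => ?_
          rw [Finset.mem_range] at hj
          rw [show -(m : ℤ) + ((kl - 1 - j : ℕ) : ℤ) = -(N : ℤ) - 1 - (j : ℤ) by omega]
        have hsplit : ∑ u ∈ Finset.Icc (-(m : ℤ)) (n : ℤ), X u ω
            = (∑ i ∈ Finset.range kl, X (-(N : ℤ) - 1 - i) ω)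
              + ((∑ u ∈ Finset.Icc (-(N : ℤ)) (N : ℤ), X u ω)
                + ∑ i ∈ Finset.range kr, X ((N : ℤ) + 1 + i) ω) := by
          rw [hIccIco, sum_Ico_consec_int (fun u => X u ω)
            (show -(m : ℤ) ≤ -(N : ℤ) by omega) (show -(N : ℤ) ≤ (n : ℤ) + 1 by omega)]
          congr 1
          · conv_lhs => rw [show -(N : ℤ) = (-(m : ℤ)) + ((kl : ℕ) : ℤ) from by omega]
            rw [sum_shift_aux (fun u => X u ω) (-(m : ℤ)) kl]
            exact hrev
          · rw [sum_Ico_consec_int (fun u => X u ω)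
              (show -(N : ℤ) ≤ (N : ℤ) + 1 by omega) (show (N : ℤ) + 1 ≤ (n : ℤ) + 1 by omega),
              Ico_eq_Icc_int_aux]
            congr 1
            rw [show (n : ℤ) + 1 = ((N : ℤ) + 1) + (kr : ℕ) by omega]
            exact sum_shift_aux (fun u => X u ω) ((N : ℤ) + 1) kr
        have e1 := hmid N N le_rfl le_rfl
        have e2 := hBlω kl
        have e3 := hBrω kr
        have hmr : (m : ℝ) = (N : ℝ) + kl := by exact_mod_cast congrArg (Nat.cast : ℕ → ℝ) hknl
        have hnr : (n : ℝ) = (N : ℝ) + kr := by exact_mod_cast congrArg (Nat.cast : ℕ → ℝ) hknr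
        have hdec : (∑ u ∈ Finset.Icc (-(m : ℤ)) (n : ℤ), X u ω) - L / 2
            = ((∑ i ∈ Finset.range kl, X (-(N : ℤ) - 1 - i) ω) - (kl : ℝ) / 2)
              + (((∑ u ∈ Finset.Icc (-(N : ℤ)) (N : ℤ), X u ω) - ((N : ℝ) + N + 1) / 2)
                + ((∑ i ∈ Finset.range kr, X ((N : ℤ) + 1 + i) ω) - (kr : ℝ) / 2)) := by
          rw [hsplit, hLdef, hmr, hnr]; ring
        rw [hdec]
        have hc1 : (0:ℝ) ≤ (kl:ℝ) := Nat.cast_nonneg kl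
        have hc2 : (0:ℝ) ≤ (kr:ℝ) := Nat.cast_nonneg kr
        have hc3 : (0:ℝ) ≤ (N:ℝ) := Nat.cast_nonneg N
        have f1 : (N : ℝ) + N + 1 + kl + kr = L := by rw [hLdef, hmr, hnr]; ring
        refine le_trans (abs_add_le _ _) ?_
        refine le_trans (add_le_add le_rfl (abs_add_le _ _)) ?_
        refine le_trans (add_le_add e2 (add_le_add e1 e3)) ?_
        rw [hδdef]; nlinarith
    rw [Set.mem_Icc]
    rw [abs_le] at key
    have h1 : 1 / L * (L / 2 - ε * L) = 1 / 2 - ε := by field_simp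
    have h2 : 1 / L * (L / 2 + ε * L) = 1 / 2 + ε := by field_simp
    constructor
    · rw [← h1]
      exact mul_le_mul_of_nonneg_left (by linarith [key.1]) (by positivity)
    · rw [← h2]
      exact mul_le_mul_of_nonneg_left (by linarith [key.2]) (by positivity)
  -- independence bookkeeping
  set mm : ℤ → MeasurableSpace Ω := fun u => MeasurableSpace.comap (X u) inferInstance with hmm
  have h_le : ∀ u, mm u ≤ (inferInstance : MeasurableSpace Ω) := fun u => (hmeas u).comap_le
  have hXmeas : ∀ (T : Set ℤ) (u : ℤ), u ∈ T → @Measurable Ω ℝ (⨆ v ∈ T, mm v) _ (X u) :=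
    fun T u hu => measurable_iff_comap_le.2 (le_biSup mm hu)
  set Sin : Set ℤ := Set.Icc (-(N : ℤ)) (N : ℤ) with hSin
  set Tl : Set ℤ := {u : ℤ | u < -(N : ℤ)} with hTl
  set Tr : Set ℤ := {u : ℤ | (N : ℤ) < u} with hTr
  have hAm : MeasurableSet[⨆ u ∈ Sin, mm u] A := by
    rw [hAdef, ← Finset.set_biInter_coe]
    refine MeasurableSet.biInter (Finset.Icc (-(N : ℤ)) (N : ℤ)).countable_toSet
      fun u hu => ?_
    have hu' : u ∈ Sin := by
      rw [Finset.mem_coe, Finset.mem_Icc] at hu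
      rw [hSin, Set.mem_Icc]; exact hu
    exact hXmeas Sin u hu' (by rw [hIdef]; exact measurableSet_Icc)
  have hBrm : MeasurableSet[⨆ u ∈ Tr, mm u] Br := by
    have hBr_eq : Br = ⋂ k : ℕ, {ω | |(∑ i ∈ Finset.range k, X ((N : ℤ) + 1 + i) ω)
        - (k : ℝ) / 2| ≤ δ * k + 2 * δ * N} := by
      rw [hBrdef]; ext ω; simp only [Set.mem_setOf_eq, Set.mem_iInter]
    rw [hBr_eq]
    refine MeasurableSet.iInter fun k => ?_
    have hsum : @Measurable Ω ℝ (⨆ u ∈ Tr, mm u) _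
        (fun ω => ∑ i ∈ Finset.range k, X ((N : ℤ) + 1 + i) ω) :=
      Finset.measurable_sum _ fun i _ => hXmeas Tr _ (by rw [hTr, Set.mem_setOf_eq]; omega)
    have hset : {ω | |(∑ i ∈ Finset.range k, X ((N : ℤ) + 1 + i) ω) - (k : ℝ) / 2|
          ≤ δ * k + 2 * δ * N}
        = (fun ω => ∑ i ∈ Finset.range k, X ((N : ℤ) + 1 + i) ω) ⁻¹'
            (Set.Icc ((k : ℝ) / 2 - (δ * k + 2 * δ * N)) ((k : ℝ) / 2 + (δ * k + 2 * δ * N))) := by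
      ext ω
      simp only [Set.mem_setOf_eq, Set.mem_preimage, Set.mem_Icc, abs_le]
      constructor <;> intro h <;> exact ⟨by linarith [h.1], by linarith [h.2]⟩
    rw [hset]
    exact hsum measurableSet_Icc
  have hBlm : MeasurableSet[⨆ u ∈ Tl, mm u] Bl := by
    have hBl_eq : Bl = ⋂ k : ℕ, {ω | |(∑ i ∈ Finset.range k, X (-(N : ℤ) - 1 - i) ω)
        - (k : ℝ) / 2| ≤ δ * k + 2 * δ * N} := by
      rw [hBldef]; ext ω; simp only [Set.mem_setOf_eq, Set.mem_iInter]
    rw [hBl_eq]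
    refine MeasurableSet.iInter fun k => ?_
    have hsum : @Measurable Ω ℝ (⨆ u ∈ Tl, mm u) _
        (fun ω => ∑ i ∈ Finset.range k, X (-(N : ℤ) - 1 - i) ω) :=
      Finset.measurable_sum _ fun i _ => hXmeas Tl _ (by rw [hTl, Set.mem_setOf_eq]; omega)
    have hset : {ω | |(∑ i ∈ Finset.range k, X (-(N : ℤ) - 1 - i) ω) - (k : ℝ) / 2|
          ≤ δ * k + 2 * δ * N}
        = (fun ω => ∑ i ∈ Finset.range k, X (-(N : ℤ) - 1 - i) ω) ⁻¹'
            (Set.Icc ((k : ℝ) / 2 - (δ * k + 2 * δ * N)) ((k : ℝ) / 2 + (δ * k + 2 * δ * N))) := by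
      ext ω
      simp only [Set.mem_setOf_eq, Set.mem_preimage, Set.mem_Icc, abs_le]
      constructor <;> intro h <;> exact ⟨by linarith [h.1], by linarith [h.2]⟩
    rw [hset]
    exact hsum measurableSet_Icc
  have hiI : iIndep mm μ := hindep.iIndep
  have hIndep1 : Indep (⨆ u ∈ Sin, mm u) (⨆ u ∈ Sinᶜ, mm u) μ :=
    indep_iSup_of_disjoint h_le hiI disjoint_compl_right
  have hdisjT : Disjoint Tl Tr := by
    rw [hTl, hTr, Set.disjoint_left]
    intro u hu1 hu2
    rw [Set.mem_setOf_eq] at hu1 hu2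
    omega
  have hIndep2 : Indep (⨆ u ∈ Tl, mm u) (⨆ u ∈ Tr, mm u) μ :=
    indep_iSup_of_disjoint h_le hiI hdisjT
  have hTlc : Tl ⊆ Sinᶜ := by
    intro u hu
    rw [hTl, Set.mem_setOf_eq] at hu
    rw [hSin, Set.mem_compl_iff, Set.mem_Icc]
    omega
  have hTrc : Tr ⊆ Sinᶜ := by
    intro u hu
    rw [hTr, Set.mem_setOf_eq] at hu
    rw [hSin, Set.mem_compl_iff, Set.mem_Icc]
    omega
  have hlel : (⨆ u ∈ Tl, mm u) ≤ ⨆ u ∈ Sinᶜ, mm u := biSup_mono fun u hu => hTlc hu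
  have hler : (⨆ u ∈ Tr, mm u) ≤ ⨆ u ∈ Sinᶜ, mm u := biSup_mono fun u hu => hTrc hu
  have hBl' : MeasurableSet[⨆ u ∈ Sinᶜ, mm u] Bl := hlel _ hBlm
  have hBr' : MeasurableSet[⨆ u ∈ Sinᶜ, mm u] Br := hler _ hBrm
  have hstep2 : μ (Bl ∩ Br) = μ Bl * μ Br := (Indep_iff _ _ _).1 hIndep2 Bl Br hBlm hBrm
  have hstep1 : μ (A ∩ (Bl ∩ Br)) = μ A * (μ Bl * μ Br) := by
    rw [(Indep_iff _ _ _).1 hIndep1 A (Bl ∩ Br) hAm (hBl'.inter hBr'), hstep2]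
  have hApos : 0 < μ A := by
    have hAeq : μ A = ∏ u ∈ Finset.Icc (-(N : ℤ)) (N : ℤ), μ (X u ⁻¹' I) := by
      rw [hAdef]
      exact hindep.meas_biInter fun u _ => ⟨I, by rw [hIdef]; exact measurableSet_Icc, rfl⟩
    rw [hAeq, CanonicallyOrderedAdd.prod_pos]
    intro u _
    rw [(hident u).measure_mem_eq (show MeasurableSet I by rw [hIdef]; exact measurableSet_Icc)]
    rw [hIdef]
    exact hmass (ε / 2) (by positivity)
  have hBrpos : 0 < μ Br := lt_of_lt_of_le hMr (measure_mono hSBr)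
  have hBlpos : 0 < μ Bl := lt_of_lt_of_le hMl (measure_mono hSBl)
  have hpos : 0 < μ (A ∩ (Bl ∩ Br)) := by
    rw [hstep1]
    exact ENNReal.mul_pos (ne_of_gt hApos)
      (ne_of_gt (ENNReal.mul_pos (ne_of_gt hBlpos) (ne_of_gt hBrpos)))
  exact lt_of_lt_of_le hpos (measure_mono hkey)
end

section
/- Let (X_u)_{u∈ℕ} be i.i.d. real random variables, let δ > 0, let p ≤ q be real numbers, and let m, n be positive natural numbers with m·p + n·q = (m+n)/2. Assume P(p ≤ X_0 ≤ p + δ) > 0 and P(q − δ ≤ X_0 ≤ q) > 0. Then for every positive integer k, the probability that (1/(k(m+n)))·∑_{u=0}^{k(m+n)−1} X_u lies in [1/2 − δ, 1/2 + δ] is strictly positive. -/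
open MeasureTheory ProbabilityTheory

/-- For i.i.d. variables with positive mass in `[p, p+δ]` and `[q-δ, q]`, where
`m·p + n·q = (m+n)/2`, the average of the first `k(m+n)` variables lies within `δ`
of `1/2` with positive probability. -/
theorem stmt_6 {Ω : Type*} [MeasurableSpace Ω] (μ : Measure Ω) [IsProbabilityMeasure μ]
    (X : ℕ → Ω → ℝ) (hmeas : ∀ u, Measurable (X u))
    (hindep : iIndepFun X μ)
    (hident : ∀ u, IdentDistrib (X u) (X 0) μ μ)
    (δ : ℝ) (hδ : 0 < δ) (p q : ℝ) (hpq : p ≤ q)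
    (m n : ℕ) (hm : 0 < m) (hn : 0 < n)
    (hbal : (m : ℝ) * p + (n : ℝ) * q = ((m : ℝ) + (n : ℝ)) / 2)
    (hp : 0 < μ {ω | X 0 ω ∈ Set.Icc p (p + δ)})
    (hq : 0 < μ {ω | X 0 ω ∈ Set.Icc (q - δ) q}) :
    ∀ k : ℕ, 0 < k →
      0 < μ {ω | (1 / (k * (m + n)) : ℝ) * ∑ u ∈ Finset.range (k * (m + n)), X u ω
        ∈ Set.Icc (1 / 2 - δ) (1 / 2 + δ)} := by
  intro k hk
  set N := k * (m + n) with hN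
  have hNmn : N = k * m + k * n := by ring
  -- the target sets
  set S : ℕ → Set ℝ := fun u => if u < k * m then Set.Icc p (p + δ) else Set.Icc (q - δ) q
    with hS
  have hSmeas : ∀ u, MeasurableSet (S u) := by
    intro u
    by_cases h : u < k * m <;> simp [hS, h, measurableSet_Icc]
  -- the big event
  have hkey : μ (⋂ u ∈ Finset.range N, X u ⁻¹' (S u))
      = ∏ u ∈ Finset.range N, μ (X u ⁻¹' (S u)) := by
    refine hindep.meas_biInter (S := Finset.range N) ?_
    intro i _
    exact ⟨S i, hSmeas i, rfl⟩
  have hpos : 0 < μ (⋂ u ∈ Finset.range N, X u ⁻¹' (S u)) := by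
    rw [hkey]
    refine CanonicallyOrderedAdd.prod_pos.2 ?_
    intro u _
    have := (hident u).measure_mem_eq (hSmeas u)
    rw [this]
    by_cases h : u < k * m
    · simpa [hS, h, Set.preimage, Set.mem_Icc] using hp
    · simpa [hS, h, Set.preimage, Set.mem_Icc] using hq
  refine lt_of_lt_of_le hpos (measure_mono ?_)
  intro ω hω
  simp only [Set.mem_iInter, Set.mem_preimage] at hω
  -- bounds on the sum
  have hsplit : ∑ u ∈ Finset.range N, X u ω
      = ∑ u ∈ Finset.range (k * m), X u ω + ∑ u ∈ Finset.range (k * n), X (k * m + u) ω := by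
    rw [hNmn, Finset.sum_range_add]
  have hkm : ((k * m : ℕ) : ℝ) = (k : ℝ) * (m : ℝ) := by push_cast; ring
  have hkn : ((k * n : ℕ) : ℝ) = (k : ℝ) * (n : ℝ) := by push_cast; ring
  have hlow1 : (k * m : ℝ) * p ≤ ∑ u ∈ Finset.range (k * m), X u ω := by
    calc (k * m : ℝ) * p = ∑ _u ∈ Finset.range (k * m), p := by
          rw [Finset.sum_const, Finset.card_range, nsmul_eq_mul, hkm]
      _ ≤ _ := by
          refine Finset.sum_le_sum fun i hi => ?_
          have hi' : i < k * m := Finset.mem_range.1 hi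
          have := hω i (Finset.mem_range.2 (by omega : i < N))
          simp only [hS, if_pos hi', Set.mem_Icc] at this
          exact this.1
  have hhigh1 : ∑ u ∈ Finset.range (k * m), X u ω ≤ (k * m : ℝ) * (p + δ) := by
    calc ∑ u ∈ Finset.range (k * m), X u ω ≤ ∑ _u ∈ Finset.range (k * m), (p + δ) := by
          refine Finset.sum_le_sum fun i hi => ?_
          have hi' : i < k * m := Finset.mem_range.1 hi
          have := hω i (Finset.mem_range.2 (by omega : i < N))
          simp only [hS, if_pos hi', Set.mem_Icc] at this
          exact this.2
      _ = (k * m : ℝ) * (p + δ) := by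
          rw [Finset.sum_const, Finset.card_range, nsmul_eq_mul, hkm]
  have hlow2 : (k * n : ℝ) * (q - δ) ≤ ∑ u ∈ Finset.range (k * n), X (k * m + u) ω := by
    calc (k * n : ℝ) * (q - δ) = ∑ _u ∈ Finset.range (k * n), (q - δ) := by
          rw [Finset.sum_const, Finset.card_range, nsmul_eq_mul, hkn]
      _ ≤ _ := by
          refine Finset.sum_le_sum fun i hi => ?_
          have hi' : i < k * n := Finset.mem_range.1 hi
          have h2 : ¬ (k * m + i < k * m) := by omega
          have := hω (k * m + i) (Finset.mem_range.2 (by omega : k * m + i < N))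
          simp only [hS, if_neg h2, Set.mem_Icc] at this
          exact this.1
  have hhigh2 : ∑ u ∈ Finset.range (k * n), X (k * m + u) ω ≤ (k * n : ℝ) * q := by
    calc ∑ u ∈ Finset.range (k * n), X (k * m + u) ω ≤ ∑ _u ∈ Finset.range (k * n), q := by
          refine Finset.sum_le_sum fun i hi => ?_
          have hi' : i < k * n := Finset.mem_range.1 hi
          have h2 : ¬ (k * m + i < k * m) := by omega
          have := hω (k * m + i) (Finset.mem_range.2 (by omega : k * m + i < N))
          simp only [hS, if_neg h2, Set.mem_Icc] at this
          exact this.2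
      _ = (k * n : ℝ) * q := by
          rw [Finset.sum_const, Finset.card_range, nsmul_eq_mul, hkn]
  have hNpos : (0 : ℝ) < (k : ℝ) * ((m : ℝ) + (n : ℝ)) := by
    have : (0:ℝ) < (k:ℝ) := by exact_mod_cast hk
    have : (0:ℝ) < (m:ℝ) + (n:ℝ) := by
      have : (0:ℝ) < (m:ℝ) := by exact_mod_cast hm
      have h2 : (0:ℝ) ≤ (n:ℝ) := by positivity
      linarith
    positivity
  have hcast : ((N : ℝ)) = (k : ℝ) * ((m : ℝ) + (n : ℝ)) := by
    push_cast [hN]; ring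
  set T := ∑ u ∈ Finset.range N, X u ω with hT
  have hlow : (k : ℝ) * ((m : ℝ) + (n : ℝ)) * (1 / 2 - δ) ≤ T := by
    rw [hsplit]
    nlinarith [hlow1, hlow2, hδ, mul_pos (show (0:ℝ) < (k:ℝ) by exact_mod_cast hk)
      (show (0:ℝ) < (m:ℝ) by exact_mod_cast hm)]
  have hhigh : T ≤ (k : ℝ) * ((m : ℝ) + (n : ℝ)) * (1 / 2 + δ) := by
    rw [hsplit]
    nlinarith [hhigh1, hhigh2, hδ, mul_pos (show (0:ℝ) < (k:ℝ) by exact_mod_cast hk)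
      (show (0:ℝ) < (n:ℝ) by exact_mod_cast hn)]
  show (1 / (k * (m + n)) : ℝ) * T ∈ Set.Icc (1 / 2 - δ) (1 / 2 + δ)
  have hcast2 : ((k : ℝ) * ((m : ℕ) + (n : ℕ) : ℝ)) = (k : ℝ) * ((m : ℝ) + (n : ℝ)) := by
    push_cast; ring
  constructor
  · rw [div_mul_eq_mul_div, one_mul, le_div_iff₀ (by push_cast; linarith [hNpos])]
    calc (1/2 - δ) * ((k : ℝ) * ((m : ℕ) + (n : ℕ) : ℝ)) 
        = (k : ℝ) * ((m : ℝ) + (n : ℝ)) * (1 / 2 - δ) := by push_cast; ring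
      _ ≤ T := hlow
  · rw [div_mul_eq_mul_div, one_mul, div_le_iff₀ (by push_cast; linarith [hNpos])]
    calc T ≤ (k : ℝ) * ((m : ℝ) + (n : ℝ)) * (1 / 2 + δ) := hhigh
      _ = (1/2 + δ) * ((k : ℝ) * ((m : ℕ) + (n : ℕ) : ℝ)) := by push_cast; ring
end

section
/- Let L ∈ ℝ, δ > 0, and let a, b : ℕ → ℝ be sequences with values in [0,1]. Let v : ℕ → ℕ be strictly increasing with v(k) ≥ k for all k ≥ 1, and assume: (i) for every k ≥ 1, ∑_{u=0}^{v(k)} a(u) = ∑_{u=0}^{v(k)} b(u); (ii) v(k+1) − v(k) ≤ k·δ for all sufficiently large k; (iii) lim_{n→∞} (1/(n+1))·∑_{u=0}^{n} a(u) = L. Then limsup_{n→∞} (1/(n+1))·∑_{u=0}^{n} b(u) ≤ L + δ and liminf_{n→∞} (1/(n+1))·∑_{u=0}^{n} b(u) ≥ L − δ. -/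
open Filter

lemma stmt8_aux_mono (a : ℕ → ℝ) (ha : ∀ u, a u ∈ Set.Icc (0 : ℝ) 1) {n m : ℕ} (h : n ≤ m) :
    ∑ u ∈ Finset.range n, a u ≤ ∑ u ∈ Finset.range m, a u := by
  apply Finset.sum_le_sum_of_subset_of_nonneg (Finset.range_subset_range.2 h)
  intro i _ _; exact (ha i).1

lemma stmt8_aux_diff (a : ℕ → ℝ) (ha : ∀ u, a u ∈ Set.Icc (0 : ℝ) 1) {n m : ℕ} (h : n ≤ m) :
    ∑ u ∈ Finset.range m, a u ≤ ∑ u ∈ Finset.range n, a u + ((m : ℝ) - n) := by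
  have hsplit : ∑ u ∈ Finset.range m, a u
      = ∑ u ∈ Finset.range n, a u + ∑ u ∈ Finset.Ico n m, a u := by
    rw [Finset.range_eq_Ico, Finset.range_eq_Ico]
    exact (Finset.sum_Ico_consecutive a (Nat.zero_le n) h).symm
  rw [hsplit]
  have hcard : ∑ u ∈ Finset.Ico n m, a u ≤ ((m : ℝ) - n) := by
    calc ∑ u ∈ Finset.Ico n m, a u ≤ ∑ u ∈ Finset.Ico n m, (1 : ℝ) :=
          Finset.sum_le_sum (fun i _ => (ha i).2)
      _ = ((m - n : ℕ) : ℝ) := by simp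
      _ = (m : ℝ) - n := by rw [Nat.cast_sub h]
  linarith

/-- If the partial sums of two `[0,1]`-valued sequences agree along a strictly increasing
sequence of sites with eventually small relative gaps, and the Cesàro averages of the first
sequence converge to `L`, then the Cesàro averages of the second stay within `δ` of `L`
asymptotically. -/
theorem stmt_8 (L δ : ℝ) (hδ : 0 < δ) (a b : ℕ → ℝ)
    (ha : ∀ u, a u ∈ Set.Icc (0 : ℝ) 1) (hb : ∀ u, b u ∈ Set.Icc (0 : ℝ) 1)
    (v : ℕ → ℕ) (hv : StrictMono v) (hvk : ∀ k, 1 ≤ k → k ≤ v k)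
    (hsum : ∀ k, 1 ≤ k →
      ∑ u ∈ Finset.range (v k + 1), a u = ∑ u ∈ Finset.range (v k + 1), b u)
    (hgap : ∀ᶠ k in atTop, ((v (k + 1) : ℝ) - (v k : ℝ)) ≤ (k : ℝ) * δ)
    (hlim : Tendsto (fun n : ℕ => (1 / (n + 1) : ℝ) * ∑ u ∈ Finset.range (n + 1), a u)
      atTop (nhds L)) :
    limsup (fun n : ℕ => (1 / (n + 1) : ℝ) * ∑ u ∈ Finset.range (n + 1), b u) atTop
      ≤ L + δ ∧
    L - δ ≤
      liminf (fun n : ℕ => (1 / (n + 1) : ℝ) * ∑ u ∈ Finset.range (n + 1), b u) atTop := by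
  set A : ℕ → ℝ := fun n => (1 / (n + 1) : ℝ) * ∑ u ∈ Finset.range (n + 1), a u with hA
  set B : ℕ → ℝ := fun n => (1 / (n + 1) : ℝ) * ∑ u ∈ Finset.range (n + 1), b u with hB
  obtain ⟨K, hK⟩ := eventually_atTop.mp hgap
  -- key eventual bound
  have key : ∀ n, v (K + 1) ≤ n → A n - δ ≤ B n ∧ B n ≤ A n + δ := by
    intro n hn
    classical
    set P : ℕ → Prop := fun j => v j ≤ n with hP
    have hK1n : K + 1 ≤ n := le_trans hv.le_apply hn
    set k := Nat.findGreatest P n with hk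
    have hKk : K + 1 ≤ k := Nat.le_findGreatest hK1n hn
    have hkpos : 1 ≤ k := le_trans (Nat.le_add_left 1 K) hKk
    have hvkn : v k ≤ n := Nat.findGreatest_spec (P := P) (m := K + 1) hK1n hn
    have hnvk1 : n < v (k + 1) := by
      by_cases h : k + 1 ≤ n
      · exact Nat.lt_of_not_le (Nat.findGreatest_is_greatest (P := P) (n := n) (Nat.lt_succ_self k) h)
      · exact lt_of_lt_of_le (Nat.lt_of_not_le h) hv.le_apply
    have hgapk : ((v (k + 1) : ℝ) - (v k : ℝ)) ≤ (k : ℝ) * δ :=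
      hK k (le_trans (Nat.le_succ K) hKk)
    have hkn : (k : ℝ) ≤ n := by
      exact_mod_cast le_trans (hvk k hkpos) hvkn
    have hnpos : (0 : ℝ) < (n : ℝ) + 1 := by positivity
    -- sum inequalities
    have hSa_eq := hsum k hkpos
    have hSa_eq' := hsum (k + 1) (Nat.le_succ_of_le hkpos)
    have h1 : v k + 1 ≤ n + 1 := by omega
    have h2 : n + 1 ≤ v (k + 1) + 1 := by omega
    -- upper bound on sum of b
    have hub : ∑ u ∈ Finset.range (n + 1), b u
        ≤ ∑ u ∈ Finset.range (n + 1), a u + ((n : ℝ) + 1) * δ := by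
      have e1 : ∑ u ∈ Finset.range (n + 1), b u
          ≤ ∑ u ∈ Finset.range (v (k + 1) + 1), b u := stmt8_aux_mono b hb h2
      have e2 : ∑ u ∈ Finset.range (v (k + 1) + 1), a u
          ≤ ∑ u ∈ Finset.range (n + 1), a u + (((v (k + 1) + 1 : ℕ) : ℝ) - ((n + 1 : ℕ) : ℝ)) :=
        stmt8_aux_diff a ha h2
      have e3 : (((v (k + 1) + 1 : ℕ) : ℝ) - ((n + 1 : ℕ) : ℝ)) ≤ (n + 1 : ℝ) * δ := by
        have hvkn' : (v k : ℝ) ≤ (n : ℝ) := by exact_mod_cast hvkn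
        push_cast
        nlinarith
      linarith [hSa_eq']
    -- lower bound on sum of b
    have hlb : ∑ u ∈ Finset.range (n + 1), a u - ((n : ℝ) + 1) * δ
        ≤ ∑ u ∈ Finset.range (n + 1), b u := by
      have e1 : ∑ u ∈ Finset.range (v k + 1), b u
          ≤ ∑ u ∈ Finset.range (n + 1), b u := stmt8_aux_mono b hb h1
      have e2 : ∑ u ∈ Finset.range (n + 1), a u
          ≤ ∑ u ∈ Finset.range (v k + 1), a u + (((n + 1 : ℕ) : ℝ) - ((v k + 1 : ℕ) : ℝ)) :=
        stmt8_aux_diff a ha h1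
      have e3 : (((n + 1 : ℕ) : ℝ) - ((v k + 1 : ℕ) : ℝ)) ≤ (n + 1 : ℝ) * δ := by
        have hnvk1' : (n : ℝ) ≤ (v (k + 1) : ℝ) - 1 := by
          have : n + 1 ≤ v (k + 1) := hnvk1
          have := (Nat.cast_le (α := ℝ)).2 this
          push_cast at this ⊢; linarith
        push_cast
        nlinarith
      linarith [hSa_eq]
    constructor
    · have : A n - B n ≤ δ := by
        have := mul_le_mul_of_nonneg_left (sub_le_iff_le_add.mpr
          (by linarith : ∑ u ∈ Finset.range (n + 1), a u
            ≤ ∑ u ∈ Finset.range (n + 1), b u + ((n : ℝ) + 1) * δ))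
          (le_of_lt (one_div_pos.mpr hnpos))
        simp only [hA, hB]
        rw [← sub_nonneg]
        have hid : (1 / ((n : ℝ) + 1)) * (((n : ℝ) + 1) * δ) = δ := by
          field_simp
        nlinarith [hlb, le_of_lt (one_div_pos.mpr hnpos)]
      linarith
    · have hid : (1 / ((n : ℝ) + 1)) * (((n : ℝ) + 1) * δ) = δ := by field_simp
      have := mul_le_mul_of_nonneg_left hub (le_of_lt (one_div_pos.mpr hnpos))
      simp only [hA, hB]
      nlinarith [le_of_lt (one_div_pos.mpr hnpos)]
  have hUB : ∀ᶠ n in atTop, B n ≤ A n + δ :=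
    eventually_atTop.mpr ⟨v (K + 1), fun n hn => (key n hn).2⟩
  have hLB : ∀ᶠ n in atTop, A n - δ ≤ B n :=
    eventually_atTop.mpr ⟨v (K + 1), fun n hn => (key n hn).1⟩
  have hB01 : ∀ n, B n ∈ Set.Icc (0 : ℝ) 1 := by
    intro n
    have hnpos : (0 : ℝ) < (n : ℝ) + 1 := by positivity
    constructor
    · exact mul_nonneg (by positivity) (Finset.sum_nonneg fun i _ => (hb i).1)
    · have : ∑ u ∈ Finset.range (n + 1), b u ≤ (n : ℝ) + 1 := by
        calc ∑ u ∈ Finset.range (n + 1), b u ≤ ∑ u ∈ Finset.range (n + 1), (1 : ℝ) :=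
              Finset.sum_le_sum fun i _ => (hb i).2
          _ = (((n + 1 : ℕ)) : ℝ) := by simp
          _ = (n : ℝ) + 1 := by push_cast; ring
      simp only [hB]
      rw [div_mul_eq_mul_div, one_mul, div_le_one hnpos]
      exact this
  have hBbddAbove : IsBoundedUnder (· ≤ ·) atTop B :=
    isBoundedUnder_of ⟨1, fun n => (hB01 n).2⟩
  have hBbddBelow : IsBoundedUnder (· ≥ ·) atTop B :=
    isBoundedUnder_of ⟨0, fun n => (hB01 n).1⟩
  have hAδlim : Tendsto (fun n => A n + δ) atTop (nhds (L + δ)) :=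
    hlim.add tendsto_const_nhds
  have hAδlim' : Tendsto (fun n => A n - δ) atTop (nhds (L - δ)) :=
    hlim.sub tendsto_const_nhds
  constructor
  · calc limsup B atTop ≤ limsup (fun n => A n + δ) atTop :=
        limsup_le_limsup hUB hBbddBelow.isCoboundedUnder_le hAδlim.isBoundedUnder_le
      _ = L + δ := hAδlim.limsup_eq
  · calc L - δ = liminf (fun n => A n - δ) atTop := hAδlim'.liminf_eq.symm
      _ ≤ liminf B atTop :=
        liminf_le_liminf hLB hAδlim'.isBoundedUnder_ge hBbddAbove.isCoboundedUnder_ge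
end

section
/- Let (X_u)_{u∈ℕ} be i.i.d. integrable real random variables with mean m = E[X_0]. Then there exists r > 0 such that the probability that for all n ∈ ℕ the average (1/(n+1))·∑_{u=0}^{n} X_u lies in [m − r, m + r] is strictly positive. -/
open MeasureTheory ProbabilityTheory Filter Topology ENNReal

/-- For i.i.d. integrable random variables with mean `m`, there is some `r > 0` such
that all Cesàro averages stay in `[m - r, m + r]` with positive probability. -/
theorem stmt_10 {Ω : Type*} [MeasurableSpace Ω] (μ : Measure Ω) [IsProbabilityMeasure μ]
    (X : ℕ → Ω → ℝ) (hmeas : ∀ u, Measurable (X u))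
    (hindep : iIndepFun X μ)
    (hident : ∀ u, IdentDistrib (X u) (X 0) μ μ)
    (hint : Integrable (X 0) μ) :
    ∃ r > (0 : ℝ),
      0 < μ {ω | ∀ n : ℕ,
        (1 / (n + 1) : ℝ) * ∑ u ∈ Finset.range (n + 1), X u ω
          ∈ Set.Icc (∫ ω', X 0 ω' ∂μ - r) (∫ ω', X 0 ω' ∂μ + r)} := by
  set m : ℝ := ∫ ω', X 0 ω' ∂μ with hm
  set g : ℕ → Ω → ℝ := fun n ω => (1 / (n + 1) : ℝ) * ∑ u ∈ Finset.range (n + 1), X u ω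
  set A : ℕ → Set Ω := fun k => {ω | ∀ n : ℕ, g n ω ∈ Set.Icc (m - (k + 1)) (m + (k + 1))}
  have hslln := strong_law_ae_real X hint
    (fun i j hij => hindep.indepFun hij) hident
  have hsub : ∀ᵐ ω ∂μ, ω ∈ ⋃ k : ℕ, A k := by
    filter_upwards [hslln] with ω hω
    have hg : Tendsto (fun n => |g n ω - m|) atTop (𝓝 |m - m|) := by
      have h1 : Tendsto (fun n : ℕ =>
          (∑ i ∈ Finset.range (n + 1), X i ω) / (n + 1)) atTop (𝓝 m) := by
        have := hω.comp (tendsto_add_atTop_nat 1)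
        simpa [Function.comp_def, Nat.cast_add, hm] using this
      have h2 : Tendsto (fun n => g n ω - m) atTop (𝓝 (m - m)) := by
        refine Tendsto.sub (h1.congr fun n => ?_) tendsto_const_nhds
        show _ = 1 / ((n : ℝ) + 1) * _
        rw [div_eq_mul_one_div, mul_comm]
      simpa using h2.abs
    have hbdd : BddAbove (Set.range fun n => |g n ω - m|) := hg.bddAbove_range
    obtain ⟨C, hC⟩ := hbdd
    refine Set.mem_iUnion.2 ⟨⌈C⌉₊, fun n => ?_⟩
    have h1 : |g n ω - m| ≤ C := hC ⟨n, rfl⟩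
    have h2 : |g n ω - m| ≤ (⌈C⌉₊ : ℝ) + 1 :=
      h1.trans ((Nat.le_ceil C).trans (by linarith))
    have := abs_le.1 h2
    constructor <;> linarith [this.1, this.2]
  by_contra h
  push_neg at h
  have hzero : ∀ k : ℕ, μ (A k) = 0 := by
    intro k
    have := h ((k : ℝ) + 1) (by positivity)
    have hle : μ (A k) ≤ μ {ω | ∀ n : ℕ,
        g n ω ∈ Set.Icc (m - ((k : ℝ) + 1)) (m + ((k : ℝ) + 1))} :=
      measure_mono (fun ω hω => hω)
    exact le_antisymm (hle.trans this) (zero_le)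
  have hU : μ (⋃ k : ℕ, A k) = 0 := measure_iUnion_null hzero
  have h1 : μ {ω | ω ∈ ⋃ k : ℕ, A k}ᶜ = 0 := hsub
  have : (1 : ℝ≥0∞) ≤ 0 := by
    calc (1 : ℝ≥0∞) = μ Set.univ := (measure_univ).symm
    _ ≤ μ (⋃ k : ℕ, A k) + μ {ω | ω ∈ ⋃ k : ℕ, A k}ᶜ := by
        rw [← Set.union_compl_self (⋃ k : ℕ, A k)]
        exact measure_union_le _ _
    _ = 0 := by rw [hU, h1]; simp
  simp at this
end

section
/- Let (X_u)_{u≥1} be i.i.d. real random variables with E[max(−X_0, 0)] < ∞ and E[max(X_0, 0)] = ∞. Then for every θ ∈ (0, ∞), the probability that (1/n)·∑_{u=1}^{n} X_u > θ for every integer n ≥ 1 is strictly positive. -/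
open MeasureTheory ProbabilityTheory
open Filter ENNReal

/-- For i.i.d. variables with integrable negative part but infinite positive part,
the running averages exceed `θ` from the very first step with positive probability. -/
theorem stmt_11 {Ω : Type*} [MeasurableSpace Ω] (μ : Measure Ω) [IsProbabilityMeasure μ]
    (X : ℕ → Ω → ℝ) (hmeas : ∀ u, Measurable (X u))
    (hindep : iIndepFun X μ)
    (hident : ∀ u, IdentDistrib (X u) (X 1) μ μ)
    (hneg : ∫⁻ ω, ENNReal.ofReal (max (-(X 1 ω)) 0) ∂μ < ⊤)
    (hpos : ∫⁻ ω, ENNReal.ofReal (max (X 1 ω) 0) ∂μ = ⊤) :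
    ∀ θ : ℝ, 0 < θ →
      0 < μ {ω | ∀ n : ℕ, 1 ≤ n →
        θ < (1 / n : ℝ) * ∑ u ∈ Finset.Icc 1 n, X u ω} := by
  intro θ hθ
  -- the negative part is integrable
  set Xm : Ω → ℝ := fun ω => max (-(X 1 ω)) 0 with hXm_def
  have hXm_meas : Measurable Xm := ((hmeas 1).neg).max measurable_const
  have hXm_nonneg : ∀ ω, 0 ≤ Xm ω := fun ω => le_max_right _ _
  have hXm_int : Integrable Xm μ := by
    refine ⟨hXm_meas.aestronglyMeasurable, ?_⟩
    rw [hasFiniteIntegral_iff_ofReal (Filter.Eventually.of_forall hXm_nonneg)]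
    exact hneg
  have hXm_int_nonneg : 0 ≤ ∫ ω, Xm ω ∂μ := integral_nonneg hXm_nonneg
  -- truncated positive parts have lintegral tending to infinity
  have hp_meas : ∀ m : ℕ, Measurable fun ω => ENNReal.ofReal (min (max (X 1 ω) 0) m) :=
    fun m => (((hmeas 1).max measurable_const).min measurable_const).ennreal_ofReal
  have hmono : Monotone fun (m : ℕ) (ω : Ω) => ENNReal.ofReal (min (max (X 1 ω) 0) m) := by
    intro i j hij
    intro ω
    exact ENNReal.ofReal_le_ofReal (min_le_min le_rfl (by exact_mod_cast hij))
  have h_sup : ∀ ω, (⨆ m : ℕ, ENNReal.ofReal (min (max (X 1 ω) 0) m))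
      = ENNReal.ofReal (max (X 1 ω) 0) := by
    intro ω
    obtain ⟨m, hm⟩ := exists_nat_ge (max (X 1 ω) 0)
    refine le_antisymm (iSup_le fun k => ENNReal.ofReal_le_ofReal (min_le_left _ _)) ?_
    exact le_iSup_of_le m (by rw [min_eq_left hm])
  have h_lint : (⨆ m : ℕ, ∫⁻ ω, ENNReal.ofReal (min (max (X 1 ω) 0) m) ∂μ) = ⊤ := by
    rw [← lintegral_iSup hp_meas hmono, ← hpos]
    exact lintegral_congr h_sup
  have hlt : ENNReal.ofReal (θ + ∫ ω, Xm ω ∂μ)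
      < ⨆ m : ℕ, ∫⁻ ω, ENNReal.ofReal (min (max (X 1 ω) 0) m) ∂μ := by
    rw [h_lint]; exact ENNReal.ofReal_lt_top
  obtain ⟨m, hm⟩ := lt_iSup_iff.mp hlt
  set M : ℝ := (m : ℝ) with hM_def
  have hM0 : (0 : ℝ) ≤ M := Nat.cast_nonneg m
  set p : Ω → ℝ := fun ω => min (max (X 1 ω) 0) M with hp_def
  have hp_m : Measurable p := ((hmeas 1).max measurable_const).min measurable_const
  have hp_nonneg : ∀ ω, 0 ≤ p ω := fun ω => le_min (le_max_right _ _) hM0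
  have hp_le : ∀ ω, p ω ≤ M := fun ω => min_le_right _ _
  have hp_int : Integrable p μ := by
    refine ⟨hp_m.aestronglyMeasurable, ?_⟩
    refine HasFiniteIntegral.of_bounded (C := M) (ae_of_all _ fun ω => ?_)
    rw [Real.norm_eq_abs, abs_le]
    exact ⟨by linarith [hp_nonneg ω], hp_le ω⟩
  have hp_eq : ∫ ω, p ω ∂μ = (∫⁻ ω, ENNReal.ofReal (p ω) ∂μ).toReal :=
    integral_eq_lintegral_of_nonneg_ae (ae_of_all _ hp_nonneg) hp_m.aestronglyMeasurable
  have hp_top : (∫⁻ ω, ENNReal.ofReal (p ω) ∂μ) ≠ ⊤ := by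
    have hb : (∫⁻ ω, ENNReal.ofReal (p ω) ∂μ) ≤ ENNReal.ofReal M * μ Set.univ := by
      rw [← lintegral_const]
      exact lintegral_mono fun ω => ENNReal.ofReal_le_ofReal (hp_le ω)
    refine ne_of_lt (lt_of_le_of_lt hb ?_)
    rw [measure_univ, mul_one]
    exact ENNReal.ofReal_lt_top
  have hmean_p : θ + ∫ ω, Xm ω ∂μ < ∫ ω, p ω ∂μ := by
    have h1 : θ + ∫ ω, Xm ω ∂μ = (ENNReal.ofReal (θ + ∫ ω, Xm ω ∂μ)).toReal :=
      (ENNReal.toReal_ofReal (by linarith)).symm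
    rw [hp_eq, h1]
    exact ENNReal.toReal_strict_mono hp_top hm
  have hkey : ∀ ω', min (X 1 ω') M = p ω' - Xm ω' := by
    intro ω'
    rcases le_total (X 1 ω') 0 with h | h
    · have h1 : max (X 1 ω') 0 = 0 := max_eq_right h
      have h2 : Xm ω' = -(X 1 ω') := max_eq_left (by linarith)
      have h3 : min (X 1 ω') M = X 1 ω' := min_eq_left (by linarith)
      simp only [hp_def, h1, h2, h3, min_eq_left hM0]
      ring
    · have h1 : max (X 1 ω') 0 = X 1 ω' := max_eq_left h
      have h2 : Xm ω' = 0 := max_eq_right (by linarith)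
      simp only [hp_def, h1, h2]
      ring
  have hmin_int : Integrable (fun ω => min (X 1 ω) M) μ := by
    have : (fun ω => min (X 1 ω) M) = fun ω => p ω - Xm ω := funext hkey
    rw [this]; exact hp_int.sub hXm_int
  have hmean : θ < ∫ ω, min (X 1 ω) M ∂μ := by
    have h2 : ∫ ω, min (X 1 ω) M ∂μ = (∫ ω, p ω ∂μ) - ∫ ω, Xm ω ∂μ := by
      rw [show (fun ω => min (X 1 ω) M) = fun ω => p ω - Xm ω from funext hkey]
      exact integral_sub hp_int hXm_int
    linarith
  -- the truncated sequence
  set Z : ℕ → Ω → ℝ := fun u ω => min (X u ω) M with hZ_def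
  have hφ : Measurable fun x : ℝ => min x M := measurable_id.min measurable_const
  have hZmeas : ∀ u, Measurable (Z u) := fun u => (hmeas u).min measurable_const
  have hZident : ∀ u, IdentDistrib (Z u) (Z 0) μ μ := fun u =>
    ((hident u).trans (hident 0).symm).comp hφ
  have hZindep : Pairwise (Function.onFun (IndepFun · · μ) Z) := fun i j hij =>
    (hindep.indepFun hij).comp hφ hφ
  have h01 : IdentDistrib (Z 0) (fun ω => min (X 1 ω) M) μ μ := (hident 0).comp hφ
  have hZ0_int : Integrable (Z 0) μ := h01.integrable_iff.mpr hmin_int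
  have hZmean : θ < ∫ ω, Z 0 ω ∂μ := by rw [h01.integral_eq]; exact hmean
  have hSLLN := strong_law_ae_real Z hZ0_int hZindep hZident
  -- the tail sums
  set T : ℕ → Ω → ℝ := fun n ω => ∑ u ∈ Finset.Icc 2 n, X u ω with hT_def
  have hae : ∀ᵐ ω ∂μ, ∃ c : ℕ, ∀ n : ℕ, 2 ≤ n → ((n : ℝ) - 1) * θ - c ≤ T n ω := by
    filter_upwards [hSLLN] with ω hω
    have hev : ∀ᶠ n in atTop, θ < (∑ i ∈ Finset.range n, Z i ω) / n :=
      hω.eventually (eventually_gt_nhds hZmean)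
    obtain ⟨N, hN⟩ := eventually_atTop.mp hev
    have hbig : ∀ n : ℕ, 2 ≤ n → N ≤ n → ((n : ℝ) - 1) * θ - (Z 0 ω + Z 1 ω) ≤ T n ω := by
      intro n h2 hNn
      have havg := hN (n + 1) (by omega)
      have hn1 : (0 : ℝ) < ((n + 1 : ℕ) : ℝ) := by positivity
      rw [lt_div_iff₀ hn1] at havg
      have hsum : θ * ((n : ℝ) + 1) < ∑ i ∈ Finset.range (n + 1), Z i ω := by
        push_cast at havg; linarith
      have hsplit : Finset.range (n + 1) = insert 0 (insert 1 (Finset.Icc 2 n)) := by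
        ext k; simp only [Finset.mem_range, Finset.mem_insert, Finset.mem_Icc]; omega
      have hZsum : ∑ i ∈ Finset.range (n + 1), Z i ω
          = Z 0 ω + Z 1 ω + ∑ u ∈ Finset.Icc 2 n, Z u ω := by
        rw [hsplit, Finset.sum_insert (by simp), Finset.sum_insert (by simp)]
        ring
      have hTZ : ∑ u ∈ Finset.Icc 2 n, Z u ω ≤ T n ω :=
        Finset.sum_le_sum fun u _ => min_le_left _ _
      have hid : θ * ((n : ℝ) + 1) = ((n : ℝ) - 1) * θ + 2 * θ := by ring
      linarith
    set N' : ℕ := max N 2 with hN'_def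
    have hne : (Finset.Icc 2 N').Nonempty := ⟨2, by simp [Finset.mem_Icc]; omega⟩
    set b : ℝ := max (Z 0 ω + Z 1 ω)
      ((Finset.Icc 2 N').sup' hne fun n => ((n : ℝ) - 1) * θ - T n ω) with hb_def
    refine ⟨⌈b⌉₊, fun n h2 => ?_⟩
    have hbc : b ≤ (⌈b⌉₊ : ℝ) := Nat.le_ceil b
    rcases le_or_gt n N' with h | h
    · have h3 : ((n : ℝ) - 1) * θ - T n ω ≤ b :=
        le_trans (Finset.le_sup' (fun k : ℕ => ((k : ℝ) - 1) * θ - T k ω) (Finset.mem_Icc.mpr ⟨h2, h⟩)) (le_max_right _ _)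
      linarith
    · have h4 := hbig n h2 (le_trans (le_max_left N 2) h.le)
      have h5 : Z 0 ω + Z 1 ω ≤ b := le_max_left _ _
      linarith
  -- the events
  set C : ℕ → Set Ω := fun c =>
    ⋂ (n : ℕ) (_ : 2 ≤ n), (T n) ⁻¹' Set.Ici (((n : ℝ) - 1) * θ - c) with hC_def
  have hC_mem : ∀ c ω, ω ∈ C c ↔ ∀ n : ℕ, 2 ≤ n → ((n : ℝ) - 1) * θ - c ≤ T n ω := by
    intro c ω; simp [hC_def, Set.mem_iInter]
  have hTmeas : ∀ n, Measurable (T n) := fun n =>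
    Finset.measurable_sum _ fun u _ => hmeas u
  obtain ⟨c, hc⟩ : ∃ c : ℕ, 0 < μ (C c) := by
    by_contra h
    push_neg at h
    have h0 : ∀ c, μ (C c) = 0 := fun c => le_antisymm (h c) (zero_le)
    have hU : μ (⋃ c : ℕ, C c) = 0 := measure_iUnion_null h0
    have hmem : ∀ᵐ ω ∂μ, ω ∈ ⋃ c : ℕ, C c := by
      filter_upwards [hae] with ω hω
      obtain ⟨c, hc⟩ := hω
      exact Set.mem_iUnion.2 ⟨c, (hC_mem c ω).mpr hc⟩
    have hcompl : μ (⋃ c : ℕ, C c)ᶜ = 0 := by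
      rw [measure_eq_zero_iff_ae_notMem]
      filter_upwards [hmem] with ω hω using not_not.mpr hω
    have h1 : (1 : ℝ≥0∞) = μ Set.univ := measure_univ.symm
    have h2 : μ Set.univ ≤ μ (⋃ c : ℕ, C c) + μ (⋃ c : ℕ, C c)ᶜ := by
      rw [← Set.union_compl_self (⋃ c : ℕ, C c)]
      exact measure_union_le _ _
    rw [hU, hcompl] at h2
    simp [← h1] at h2
  -- the head event
  set A : Set Ω := (X 1) ⁻¹' Set.Ioi (θ + c) with hA_def
  have hApos : 0 < μ A := by
    rcases eq_zero_or_pos (μ A) with h | h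
    · exfalso
      have hle : ∀ᵐ ω ∂μ, X 1 ω ≤ θ + c := by
        filter_upwards [measure_eq_zero_iff_ae_notMem.mp h] with ω hω
        simpa [hA_def, not_lt] using hω
      have hb : ∫⁻ ω, ENNReal.ofReal (max (X 1 ω) 0) ∂μ
          ≤ ENNReal.ofReal (max (θ + c) 0) * μ Set.univ := by
        rw [← lintegral_const]
        refine lintegral_mono_ae ?_
        filter_upwards [hle] with ω hω
        exact ENNReal.ofReal_le_ofReal (max_le_max hω le_rfl)
      rw [hpos, measure_univ, mul_one] at hb
      exact (ENNReal.ofReal_lt_top.not_ge hb).elim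
    · exact h
  -- independence
  have hIndep : Indep (MeasurableSpace.comap (X 1) inferInstance)
      (⨆ u ∈ {u : ℕ | 2 ≤ u}, MeasurableSpace.comap (X u) inferInstance) μ := by
    have hd : Disjoint ({1} : Set ℕ) {u : ℕ | 2 ≤ u} := by
      rw [Set.disjoint_left]
      rintro x rfl hx
      · simp at hx
    have h := indep_iSup_of_disjoint (fun u => (hmeas u).comap_le) hindep hd
    simpa using h
  set m2 : MeasurableSpace Ω :=
    ⨆ u ∈ {u : ℕ | 2 ≤ u}, MeasurableSpace.comap (X u) inferInstance with hm2_def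
  have hXm2 : ∀ u, 2 ≤ u → Measurable[m2] (X u) := by
    intro u hu
    have hle : MeasurableSpace.comap (X u) inferInstance ≤ m2 :=
      le_biSup (fun u : ℕ => MeasurableSpace.comap (X u) inferInstance)
        (show u ∈ {u : ℕ | 2 ≤ u} from hu)
    exact Measurable.mono (measurable_iff_comap_le.2 le_rfl) hle le_rfl
  have hT2 : ∀ n, Measurable[m2] (T n) := fun n =>
    Finset.measurable_sum (m := m2) _ fun u hu => hXm2 u (Finset.mem_Icc.mp hu).1
  have hCm2 : MeasurableSet[m2] (C c) := by
    refine MeasurableSet.iInter fun n => MeasurableSet.iInter fun hn => ?_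
    exact (hT2 n) measurableSet_Ici
  have hAm1 : MeasurableSet[MeasurableSpace.comap (X 1) inferInstance] A :=
    ⟨Set.Ioi (θ + c), measurableSet_Ioi, rfl⟩
  have hmul : μ (A ∩ C c) = μ A * μ (C c) :=
    ((indep_iff_forall_indepSet μ).mp hIndep A (C c) hAm1 hCm2).measure_inter_eq_mul
  have hABpos : 0 < μ (A ∩ C c) := by
    rw [hmul]
    exact ENNReal.mul_pos hApos.ne' hc.ne'
  -- inclusion into the target event
  refine lt_of_lt_of_le hABpos (measure_mono ?_)
  rintro ω ⟨hωA, hωC⟩ n hn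
  have hX1 : θ + c < X 1 ω := hωA
  have hn0 : (0 : ℝ) < (n : ℝ) := by exact_mod_cast hn
  have hsplit : Finset.Icc 1 n = insert 1 (Finset.Icc 2 n) := by
    ext k; simp only [Finset.mem_insert, Finset.mem_Icc]; omega
  have hS : ∑ u ∈ Finset.Icc 1 n, X u ω = X 1 ω + T n ω := by
    rw [hsplit, Finset.sum_insert (by simp)]
  have hTn : ((n : ℝ) - 1) * θ - c ≤ T n ω := by
    rcases eq_or_lt_of_le hn with h1 | h1
    · have : T n ω = 0 := by
        simp [hT_def, ← h1]
      rw [this, ← h1]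
      push_cast
      linarith
    · exact (hC_mem c ω).mp hωC n (by omega)
  rw [hS]
  rw [one_div, inv_mul_eq_div, lt_div_iff₀ hn0]
  have hid : θ * (n : ℝ) = θ + ((n : ℝ) - 1) * θ := by ring
  linarith
end
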